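/- arXiv:1609.01680 — 2 statements merged into one kernel-verified Lean document; each statement's English description precedes it below -/
import Mathlib

section
/- For integers 1 ≤ L ≤ J, the sum (1/(2L+1)) ∑_{m=−L+1}^{L} √(J(J+1) − m(m−1)) is bounded below by 2JL/(2L+1) − J·(2L(L²−1))/(3J(J+1)(2L+1)), and hence by NL/(2L+1) − 2L²/(3(N+2)) when J = N/2. -/
lemma icc_split (L : ℕ) : Finset.Icc (-(L:ℤ)) ((L:ℤ)+1)
    = insert (-(L:ℤ)) (insert ((L:ℤ)+1) (Finset.Icc (-(L:ℤ)+1) (L:ℤ))) := by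
  ext x; simp; omega

lemma sum_mm (L : ℕ) : (∑ m ∈ Finset.Icc (-(L:ℤ)+1) (L:ℤ), m*(m-1)) * 3
    = 2*(L:ℤ)^3 - 2*L := by
  induction L with
  | zero => simp
  | succ L ih =>
    have h1 : (-(((L:ℕ)+1 : ℕ) :ℤ)+1) = -(L:ℤ) := by push_cast; ring
    have h2 : (((L:ℕ)+1 : ℕ) : ℤ) = (L:ℤ)+1 := by push_cast; ring
    rw [h1, h2, icc_split]
    rw [Finset.sum_insert (by simp; omega), Finset.sum_insert (by simp)]
    nlinarith [ih]

/-- for integers `1 ≤ L ≤ J`, the sum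
`(1/(2L+1)) ∑_{m=−L+1}^{L} √(J(J+1) − m(m−1))` is bounded below by
`2JL/(2L+1) − J·(2L(L²−1))/(3J(J+1)(2L+1))`, and hence by
`NL/(2L+1) − 2L²/(3(N+2))` when `J = N/2`. -/
theorem ladder_sum_lower_bound (L J : ℕ) (hL : 1 ≤ L) (hLJ : L ≤ J)
    (N : ℝ) (hN : N = 2 * J) :
    2 * J * L / (2 * L + 1)
        - (J : ℝ) * (2 * L * ((L : ℝ) ^ 2 - 1)) / (3 * J * (J + 1) * (2 * L + 1)) ≤
      (1 / (2 * L + 1) : ℝ) *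
        ∑ m ∈ Finset.Icc (-(L : ℤ) + 1) (L : ℤ),
          Real.sqrt ((J : ℝ) * (J + 1) - (m : ℝ) * ((m : ℝ) - 1)) ∧
    N * L / (2 * L + 1) - 2 * (L : ℝ) ^ 2 / (3 * (N + 2)) ≤
      (1 / (2 * L + 1) : ℝ) *
        ∑ m ∈ Finset.Icc (-(L : ℤ) + 1) (L : ℤ),
          Real.sqrt ((J : ℝ) * (J + 1) - (m : ℝ) * ((m : ℝ) - 1)) := by
  have hJ1 : (1:ℝ) ≤ J := by exact_mod_cast hL.trans hLJ
  have hL1 : (1:ℝ) ≤ L := by exact_mod_cast hL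
  have hLJr : (L:ℝ) ≤ J := by exact_mod_cast hLJ
  have hJpos : (0:ℝ) < J := by linarith
  have ha : (0:ℝ) < (J:ℝ) * (J + 1) := by nlinarith
  have hd : (0:ℝ) < 2 * L + 1 := by linarith
  -- per term lower bound
  have hterm : ∀ m ∈ Finset.Icc (-(L : ℤ) + 1) (L : ℤ),
      (J:ℝ) - (J:ℝ) * ((m:ℝ) * ((m:ℝ) - 1)) / ((J:ℝ) * (J + 1)) ≤
        Real.sqrt ((J : ℝ) * (J + 1) - (m : ℝ) * ((m : ℝ) - 1)) := by
    intro m hm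
    simp only [Finset.mem_Icc] at hm
    have hmL : ((m:ℝ)) ≤ L := by exact_mod_cast hm.2
    have hmL' : -(L:ℝ) + 1 ≤ (m:ℝ) := by exact_mod_cast hm.1
    set t : ℝ := (m:ℝ) * ((m:ℝ) - 1) with ht
    have ht0 : 0 ≤ t := by
      have h : (0:ℤ) ≤ m * (m - 1) := by
        rcases le_or_gt m 0 with h | h
        · nlinarith
        · nlinarith
      rw [ht]; exact_mod_cast h
    have htle : t ≤ (L:ℝ) * (L - 1) := by nlinarith
    have htA : t ≤ (J:ℝ) * (J+1) := by nlinarith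
    have hx0 : 0 ≤ (J:ℝ) - (J:ℝ) * t / ((J:ℝ) * (J + 1)) := by
      rw [sub_nonneg, div_le_iff₀ ha]
      nlinarith
    rw [Real.le_sqrt hx0 (by linarith)]
    have hrepr : (J:ℝ) - (J:ℝ) * t / ((J:ℝ) * (J + 1))
        = (J:ℝ) * ((J:ℝ) * (J + 1) - t) / ((J:ℝ) * (J + 1)) := by
      field_simp
    rw [hrepr, div_pow, div_le_iff₀ (by positivity)]
    nlinarith [sq_nonneg ((J:ℝ)*(J+1) - t)]
  have hsum := Finset.sum_le_sum hterm
  -- compute the lower-bound sum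
  have hcard : (Finset.Icc (-(L : ℤ) + 1) (L : ℤ)).card = 2 * L := by
    rw [Int.card_Icc]; omega
  have hsmm : ∑ m ∈ Finset.Icc (-(L : ℤ) + 1) (L : ℤ), ((m:ℝ) * ((m:ℝ) - 1))
      = (2*(L:ℝ)^3 - 2*L) / 3 := by
    have h := sum_mm L
    have h2 : ((∑ m ∈ Finset.Icc (-(L:ℤ)+1) (L:ℤ), m*(m-1) : ℤ) : ℝ) * 3
        = 2*(L:ℝ)^3 - 2*L := by exact_mod_cast congrArg (Int.cast : ℤ → ℝ) h
    push_cast at h2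
    linarith
  have hsum2 : ∑ m ∈ Finset.Icc (-(L : ℤ) + 1) (L : ℤ),
      ((J:ℝ) - (J:ℝ) * ((m:ℝ) * ((m:ℝ) - 1)) / ((J:ℝ) * (J + 1)))
      = 2*L*(J:ℝ) - (J:ℝ)/((J:ℝ)*(J+1)) * ((2*(L:ℝ)^3 - 2*L)/3) := by
    have h3 : ∀ m : ℤ, (J:ℝ) * ((m:ℝ)*((m:ℝ)-1)) / ((J:ℝ)*(J+1))
        = (J:ℝ)/((J:ℝ)*(J+1)) * ((m:ℝ)*((m:ℝ)-1)) := fun m => by ring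
    rw [Finset.sum_sub_distrib, Finset.sum_const, hcard]
    simp_rw [h3]
    rw [← Finset.mul_sum, hsmm, nsmul_eq_mul]
    push_cast
    ring
  rw [hsum2] at hsum
  have hfirst : 2 * (J:ℝ) * L / (2 * L + 1)
      - (J : ℝ) * (2 * L * ((L : ℝ) ^ 2 - 1)) / (3 * J * (J + 1) * (2 * L + 1)) ≤
      (1 / (2 * L + 1) : ℝ) *
        ∑ m ∈ Finset.Icc (-(L : ℤ) + 1) (L : ℤ),
          Real.sqrt ((J : ℝ) * (J + 1) - (m : ℝ) * ((m : ℝ) - 1)) := by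
    have key : 2 * (J:ℝ) * L / (2 * L + 1)
        - (J : ℝ) * (2 * L * ((L : ℝ) ^ 2 - 1)) / (3 * J * (J + 1) * (2 * L + 1))
        = (1 / (2 * L + 1) : ℝ) *
            (2*L*(J:ℝ) - (J:ℝ)/((J:ℝ)*(J+1)) * ((2*(L:ℝ)^3 - 2*L)/3)) := by
      field_simp
    rw [key]
    exact mul_le_mul_of_nonneg_left hsum (by positivity)
  refine ⟨hfirst, le_trans ?_ hfirst⟩
  subst hN
  have hcmp : (0:ℝ) ≤ 2 * (J:ℝ) * L / (2 * L + 1)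
      - (J : ℝ) * (2 * L * ((L : ℝ) ^ 2 - 1)) / (3 * J * (J + 1) * (2 * L + 1))
      - (2 * (J:ℝ) * L / (2 * L + 1) - 2 * (L : ℝ) ^ 2 / (3 * (2 * (J:ℝ) + 2))) := by
    have e1 : 2 * (J:ℝ) * L / (2 * L + 1)
        - (J : ℝ) * (2 * L * ((L : ℝ) ^ 2 - 1)) / (3 * J * (J + 1) * (2 * L + 1))
        - (2 * (J:ℝ) * L / (2 * L + 1) - 2 * (L : ℝ) ^ 2 / (3 * (2 * (J:ℝ) + 2)))
        = ((L:ℝ)^2 + 2*L) / (3 * (J + 1) * (2 * L + 1)) := by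
      field_simp
      ring
    rw [e1]
    positivity
  linarith
end

section
/- Suppose Var[X^{(N)}] = N/3 − (2/3)⟨S_x⟩ + (4/9)L(L+1) with ⟨S_x⟩ ≥ NL/(2L+1) − 2L²/(3(N+2)). Then Var[X^{(N)}] ≤ (4/9)L(L+1) + N/(3(2L+1)) + 4L²/(9(N+2)); and with L = ⌊N^{1/3}⌋ this bound is O(N^{2/3}) as N → ∞. -/
lemma aux_dicke_bound (t : ℝ) (m : ℕ) (nr : ℝ) (ht1 : 1 ≤ t)
    (hcube : t * t * t = nr) (hm1 : (m : ℝ) ≤ t) (hm2 : t < (m : ℝ) + 1) :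
    4 / 9 * (m : ℝ) * ((m : ℝ) + 1) + nr / (3 * (2 * (m : ℝ) + 1))
      + 4 * (m : ℝ) ^ 2 / (9 * (nr + 2)) ≤ 3 * (t * t) := by
  have ht0 : 0 < t := by linarith
  have hm0 : (0 : ℝ) ≤ (m : ℝ) := Nat.cast_nonneg m
  have hnr1 : 1 ≤ nr := by nlinarith
  have hd1 : (0 : ℝ) < 3 * (2 * (m : ℝ) + 1) := by linarith
  have hd2 : (0 : ℝ) < 9 * (nr + 2) := by linarith
  have hT1 : 4 / 9 * (m : ℝ) * ((m : ℝ) + 1) ≤ 8 / 9 * (t * t) := by nlinarith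
  have hT2 : nr / (3 * (2 * (m : ℝ) + 1)) ≤ t * t / 3 := by
    rw [div_le_div_iff₀ hd1 (by norm_num)]
    nlinarith
  have hT3 : 4 * (m : ℝ) ^ 2 / (9 * (nr + 2)) ≤ t * t := by
    rw [div_le_iff₀ hd2]
    nlinarith
  have hu : 0 ≤ t * t := by positivity
  linarith

/-- if `Var[X^{(N)}] = N/3 − (2/3)⟨S_x⟩ + (4/9)L(L+1)` with
`⟨S_x⟩ ≥ NL/(2L+1) − 2L²/(3(N+2))`, then
`Var[X^{(N)}] ≤ (4/9)L(L+1) + N/(3(2L+1)) + 4L²/(9(N+2))`; and with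
`L = ⌊N^{1/3}⌋` this bound is `O(N^{2/3})`. -/
theorem variance_bound_dicke (N L : ℕ) (hN : 1 ≤ N) (hL : 1 ≤ L)
    (hLN : 2 * L ≤ N) (Sx V : ℝ)
    (hSx : (N : ℝ) * L / (2 * L + 1) - 2 * (L : ℝ) ^ 2 / (3 * ((N : ℝ) + 2)) ≤ Sx)
    (hV : V = (N : ℝ) / 3 - 2 / 3 * Sx + 4 / 9 * L * ((L : ℝ) + 1)) :
    V ≤ 4 / 9 * L * ((L : ℝ) + 1) + (N : ℝ) / (3 * (2 * L + 1))
        + 4 * (L : ℝ) ^ 2 / (9 * ((N : ℝ) + 2)) ∧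
    ∃ C : ℝ, 0 < C ∧ ∀ n : ℕ, 1 ≤ n →
      (4 / 9 * (⌊(n : ℝ) ^ ((1 : ℝ) / 3)⌋₊ : ℝ) * ((⌊(n : ℝ) ^ ((1 : ℝ) / 3)⌋₊ : ℝ) + 1)
        + (n : ℝ) / (3 * (2 * (⌊(n : ℝ) ^ ((1 : ℝ) / 3)⌋₊ : ℝ) + 1))
        + 4 * (⌊(n : ℝ) ^ ((1 : ℝ) / 3)⌋₊ : ℝ) ^ 2 / (9 * ((n : ℝ) + 2)))
      ≤ C * (n : ℝ) ^ ((2 : ℝ) / 3) := by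
  constructor
  · have hL' : (1 : ℝ) ≤ (L : ℝ) := by exact_mod_cast hL
    have hN' : (1 : ℝ) ≤ (N : ℝ) := by exact_mod_cast hN
    have hden : (0 : ℝ) < 2 * (L : ℝ) + 1 := by linarith
    have key : (N : ℝ) / 3 - 2 / 3 * ((N : ℝ) * L / (2 * L + 1)
        - 2 * (L : ℝ) ^ 2 / (3 * ((N : ℝ) + 2)))
        = (N : ℝ) / (3 * (2 * L + 1)) + 4 * (L : ℝ) ^ 2 / (9 * ((N : ℝ) + 2)) := by
      field_simp
      ring
    have h2 : -2 / 3 * Sx ≤ -2 / 3 * ((N : ℝ) * L / (2 * L + 1)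
        - 2 * (L : ℝ) ^ 2 / (3 * ((N : ℝ) + 2))) := by nlinarith
    rw [hV]
    nlinarith [key, h2]
  · refine ⟨3, by norm_num, fun n hn => ?_⟩
    have hn0 : (0 : ℝ) < (n : ℝ) := by exact_mod_cast hn
    have hn1 : (1 : ℝ) ≤ (n : ℝ) := by exact_mod_cast hn
    have ht1 : 1 ≤ (n : ℝ) ^ ((1 : ℝ) / 3) := Real.one_le_rpow hn1 (by norm_num)
    have hcube : (n : ℝ) ^ ((1 : ℝ) / 3) * (n : ℝ) ^ ((1 : ℝ) / 3) * (n : ℝ) ^ ((1 : ℝ) / 3)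
        = (n : ℝ) := by
      rw [← Real.rpow_add hn0, ← Real.rpow_add hn0]
      norm_num
    have hsq : (n : ℝ) ^ ((2 : ℝ) / 3)
        = (n : ℝ) ^ ((1 : ℝ) / 3) * (n : ℝ) ^ ((1 : ℝ) / 3) := by
      rw [← Real.rpow_add hn0]
      norm_num
    have hm1 : ((⌊(n : ℝ) ^ ((1 : ℝ) / 3)⌋₊ : ℕ) : ℝ) ≤ (n : ℝ) ^ ((1 : ℝ) / 3) :=
      Nat.floor_le (by linarith)
    have hm2 : (n : ℝ) ^ ((1 : ℝ) / 3) < ((⌊(n : ℝ) ^ ((1 : ℝ) / 3)⌋₊ : ℕ) : ℝ) + 1 :=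
      Nat.lt_floor_add_one _
    have := aux_dicke_bound ((n : ℝ) ^ ((1 : ℝ) / 3)) ⌊(n : ℝ) ^ ((1 : ℝ) / 3)⌋₊ (n : ℝ)
      ht1 hcube hm1 hm2
    rw [hsq]
    linarith
end
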